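/- arXiv:1210.0017 — 3 statements merged into one kernel-verified Lean document; each statement's English description precedes it below -/
import Mathlib

section
/- There exists a universal constant C such that for every integer z ≥ 0 and every i ∈ {1,2,3,4}, the i-th derivative of the Hermite function h_z satisfies ∫_ℝ |h_z^{(i)}(u)| du ≤ C (1+z)^{(2i+1)/4}. -/
open MeasureTheory Real

/-- The Hermite function `h_z`. For `z = 0` this formula reduces to
`π^{-1/2} e^{-u²/2}`, matching the convention in the paper. -/
noncomputable def hermiteFun (z : ℕ) (u : ℝ) : ℝ :=
  ((2 : ℝ) ^ z * (Nat.factorial z : ℝ)) ^ (-(1 : ℝ) / 2) * (-1 : ℝ) ^ z *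
    Real.pi ^ (-(1 : ℝ) / 2) * Real.exp (u ^ 2 / 2) *
    iteratedDeriv z (fun v : ℝ => Real.exp (-v ^ 2)) u

open Polynomial

/-- Normalized (physicists') Hermite polynomial factor: `h_z u = (HP z).eval u * exp (-u²/2)`. -/
noncomputable def HP : ℕ → Polynomial ℝ
  | 0 => Polynomial.C (Real.pi ^ (-(1:ℝ)/2))
  | (z+1) => Polynomial.C ((2*((z:ℝ)+1)) ^ (-(1:ℝ)/2)) *
      (2 * Polynomial.X * HP z - Polynomial.derivative (HP z))

/-- Polynomial times half-gaussian. -/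
noncomputable def Gh (q : Polynomial ℝ) (u : ℝ) : ℝ := q.eval u * Real.exp (-(u^2/2))

/-- Polynomial times gaussian. -/
noncomputable def Gf (q : Polynomial ℝ) (u : ℝ) : ℝ := q.eval u * Real.exp (-u^2)

lemma contDiff_evalP (q : Polynomial ℝ) : ContDiff ℝ (⊤:ℕ∞) (fun u : ℝ => q.eval u) := by
  have h : (fun u : ℝ => q.eval u)
      = fun u => ∑ i ∈ Finset.range (q.natDegree+1), q.coeff i * u ^ i :=
    funext fun u => q.eval_eq_sum_range u
  rw [h]
  exact ContDiff.sum fun i _ => contDiff_const.mul (contDiff_id.pow i)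

lemma contDiff_Gh (q : Polynomial ℝ) : ContDiff ℝ (⊤:ℕ∞) (Gh q) := by
  exact (contDiff_evalP q).mul
    (Real.contDiff_exp.comp (((contDiff_id.pow 2).div_const 2).neg))

lemma hasDerivAt_Gh (q : Polynomial ℝ) (u : ℝ) :
    HasDerivAt (Gh q) (Gh (derivative q - X * q) u) u := by
  have h1 : HasDerivAt (fun u : ℝ => q.eval u) (q.derivative.eval u) u := q.hasDerivAt u
  have hu : HasDerivAt (fun u : ℝ => -(u^2/2)) (-u) u := by
    have := ((hasDerivAt_pow 2 u).div_const 2).neg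
    exact this.congr_deriv (by ring)
  have h2 : HasDerivAt (fun u : ℝ => Real.exp (-(u^2/2)))
      (Real.exp (-(u^2/2)) * (-u)) u := hu.exp
  have := h1.mul h2
  unfold Gh
  refine this.congr_deriv ?_
  simp only [Polynomial.eval_sub, Polynomial.eval_mul, Polynomial.eval_X]
  ring

lemma deriv_Gh (q : Polynomial ℝ) : deriv (Gh q) = Gh (derivative q - X * q) := by
  funext u
  exact (hasDerivAt_Gh q u).deriv

lemma hasDerivAt_Gf (q : Polynomial ℝ) (u : ℝ) :
    HasDerivAt (Gf q) (Gf (derivative q - 2 * X * q) u) u := by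
  have h1 : HasDerivAt (fun u : ℝ => q.eval u) (q.derivative.eval u) u := q.hasDerivAt u
  have hu : HasDerivAt (fun u : ℝ => -u^2) (-(2*u)) u := by
    have := (hasDerivAt_pow 2 u).neg
    exact this.congr_deriv (by ring)
  have h2 : HasDerivAt (fun u : ℝ => Real.exp (-u^2))
      (Real.exp (-u^2) * (-(2*u))) u := hu.exp
  have := h1.mul h2
  unfold Gf
  refine this.congr_deriv ?_
  simp only [Polynomial.eval_sub, Polynomial.eval_mul, Polynomial.eval_X,
    Polynomial.eval_ofNat]
  ring

lemma integrable_polyGauss (q : Polynomial ℝ) {b : ℝ} (hb : 0 < b) :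
    Integrable (fun u : ℝ => q.eval u * Real.exp (-(b*u^2))) := by
  have key : ∀ i : ℕ, Integrable (fun u : ℝ => u ^ i * Real.exp (-(b*u^2))) := by
    intro i
    have hs : (-1:ℝ) < (i:ℝ) := by
      have : (0:ℝ) ≤ (i:ℝ) := Nat.cast_nonneg i
      linarith
    have h := integrable_rpow_mul_exp_neg_mul_sq hb hs
    simpa [Real.rpow_natCast, neg_mul] using h
  have h : (fun u : ℝ => q.eval u * Real.exp (-(b*u^2)))
      = fun u => ∑ i ∈ Finset.range (q.natDegree+1),
          q.coeff i * (u ^ i * Real.exp (-(b*u^2))) := by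
    funext u
    rw [q.eval_eq_sum_range, Finset.sum_mul]
    exact Finset.sum_congr rfl fun i _ => by ring
  rw [h]
  exact integrable_finset_sum _ fun i _ => ((key i).const_mul _)

lemma integrable_Gh (q : Polynomial ℝ) : Integrable (Gh q) := by
  have := integrable_polyGauss q (b := (1:ℝ)/2) (by norm_num)
  unfold Gh
  convert this using 2 with u
  ring_nf

lemma integrable_Gf (q : Polynomial ℝ) : Integrable (Gf q) := by
  have := integrable_polyGauss q (b := (1:ℝ)) (by norm_num)
  unfold Gf
  convert this using 2 with u
  ring_nf

lemma tendsto_Gf_atTop (q : Polynomial ℝ) : Filter.Tendsto (Gf q) Filter.atTop (nhds 0) := by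
  have key : ∀ i : ℕ, Filter.Tendsto (fun u : ℝ => u ^ i * Real.exp (-u^2))
      Filter.atTop (nhds 0) := by
    intro i
    have hlo := rpow_mul_exp_neg_mul_sq_isLittleO_exp_neg (b := (1:ℝ)) one_pos (i:ℝ)
    have hlin : Filter.Tendsto (fun x : ℝ => -(1/2) * x) Filter.atTop Filter.atBot := by
      have h1 : Filter.Tendsto (fun x : ℝ => (1/2 : ℝ) * x) Filter.atTop Filter.atTop :=
        Filter.Tendsto.const_mul_atTop (by norm_num) Filter.tendsto_id
      have h2 := Filter.tendsto_neg_atTop_atBot.comp h1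
      simpa [Function.comp_def, neg_mul] using h2
    have hexp : Filter.Tendsto (fun x : ℝ => Real.exp (-(1/2) * x))
        Filter.atTop (nhds 0) := by
      have := Real.tendsto_exp_atBot.comp hlin
      simpa [Function.comp_def] using this
    have := hlo.isBigO.trans_tendsto hexp
    simpa [Real.rpow_natCast, neg_mul, one_mul] using this
  have h : Gf q = fun u => ∑ i ∈ Finset.range (q.natDegree+1),
      q.coeff i * (u ^ i * Real.exp (-u^2)) := by
    funext u
    unfold Gf
    rw [q.eval_eq_sum_range, Finset.sum_mul]
    exact Finset.sum_congr rfl fun i _ => by ring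
  rw [h]
  have : Filter.Tendsto (fun u : ℝ => ∑ i ∈ Finset.range (q.natDegree+1),
      q.coeff i * (u ^ i * Real.exp (-u^2))) Filter.atTop
      (nhds (∑ i ∈ Finset.range (q.natDegree+1), q.coeff i * 0)) :=
    tendsto_finset_sum _ fun i _ => ((key i).const_mul _)
  simpa using this

lemma tendsto_Gf_atBot (q : Polynomial ℝ) : Filter.Tendsto (Gf q) Filter.atBot (nhds 0) := by
  have h : Gf q = fun u => Gf (q.comp (-X)) (-u) := by
    funext u
    unfold Gf
    simp [Polynomial.eval_comp]
  rw [h]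
  exact (tendsto_Gf_atTop (q.comp (-X))).comp Filter.tendsto_neg_atBot_atTop

/-- Integral of a total derivative vanishes. -/
lemma integral_Gf_D (s : Polynomial ℝ) :
    ∫ u : ℝ, Gf (derivative s - 2 * X * s) u = 0 := by
  set F := Gf s with hFdef
  set f' := Gf (derivative s - 2 * X * s) with hf'def
  have hF : ∀ u : ℝ, HasDerivAt F (f' u) u := hasDerivAt_Gf s
  have hint : Integrable f' := integrable_Gf _
  have hcont1 : ContinuousWithinAt F (Set.Iic 0) 0 :=
    (hF 0).continuousAt.continuousWithinAt
  have hcont2 : ContinuousWithinAt F (Set.Ici 0) 0 :=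
    (hF 0).continuousAt.continuousWithinAt
  have h1 := MeasureTheory.integral_Iic_of_hasDerivAt_of_tendsto hcont1
    (fun x _ => hF x) hint.integrableOn (tendsto_Gf_atBot s)
  have h2 := MeasureTheory.integral_Ioi_of_hasDerivAt_of_tendsto hcont2
    (fun x _ => hF x) hint.integrableOn (tendsto_Gf_atTop s)
  rw [← intervalIntegral.integral_Iic_add_Ioi (b := (0:ℝ))
    hint.integrableOn hint.integrableOn, h1, h2]
  ring


lemma rpow_mul_kappa {t : ℝ} (ht : 0 < t) : t * t ^ (-(1:ℝ)/2) = t ^ ((1:ℝ)/2) := by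
  nth_rewrite 1 [← Real.rpow_one t]
  rw [← Real.rpow_add ht]
  norm_num

lemma rpow_sigma_kappa {t : ℝ} (ht : 0 < t) : t ^ ((1:ℝ)/2) * t ^ (-(1:ℝ)/2) = 1 := by
  rw [← Real.rpow_add ht]
  norm_num

lemma HP_succ_def (z : ℕ) : HP (z+1) = Polynomial.C ((2*((z:ℝ)+1)) ^ (-(1:ℝ)/2)) *
    (2 * Polynomial.X * HP z - Polynomial.derivative (HP z)) := rfl

lemma HP_ode_derivP (z : ℕ) :
    (derivative (derivative (HP z)) =
      2 * X * derivative (HP z) - Polynomial.C (2*(z:ℝ)) * HP z) ∧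
    (derivative (HP (z+1)) = Polynomial.C ((2*((z:ℝ)+1)) ^ ((1:ℝ)/2)) * HP z) := by
  have step : ∀ w : ℕ, (derivative (derivative (HP w)) =
      2 * X * derivative (HP w) - Polynomial.C (2*(w:ℝ)) * HP w) →
      derivative (HP (w+1)) = Polynomial.C ((2*((w:ℝ)+1)) ^ ((1:ℝ)/2)) * HP w := by
    intro w hode
    have hpos : (0:ℝ) < 2*((w:ℝ)+1) := by positivity
    rw [HP_succ_def, derivative_C_mul]
    have h2 : derivative (2 * X * HP w - derivative (HP w))
        = Polynomial.C (2*((w:ℝ)+1)) * HP w := by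
      rw [derivative_sub, hode, derivative_mul, derivative_mul]
      simp only [derivative_ofNat, derivative_X, map_mul, map_add, map_ofNat, map_one]
      ring
    rw [h2, ← mul_assoc, ← map_mul, mul_comm ((2*((w:ℝ)+1)) ^ (-(1:ℝ)/2)) _,
      rpow_mul_kappa hpos]
  have ode : ∀ w : ℕ, derivative (derivative (HP w)) =
      2 * X * derivative (HP w) - Polynomial.C (2*(w:ℝ)) * HP w := by
    intro w
    induction w with
    | zero => simp [HP]
    | succ w ih =>
        have hd := step w ih
        have hpos : (0:ℝ) < 2*((w:ℝ)+1) := by positivity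
        rw [hd, derivative_C_mul]
        push_cast
        rw [HP_succ_def]
        rw [← mul_assoc (Polynomial.C (2*((w:ℝ)+1))), ← map_mul, rpow_mul_kappa hpos]
        ring
  exact ⟨ode z, step z (ode z)⟩

lemma hermiteFun_eq_Gh (z : ℕ) : hermiteFun z = Gh (HP z) := by
  have iterated_gauss : ∀ z : ℕ, iteratedDeriv z (fun v : ℝ => Real.exp (-v^2)) = fun u =>
      ((-1:ℝ)^z * ((2:ℝ)^z * (Nat.factorial z : ℝ)) ^ ((1:ℝ)/2) * Real.pi ^ ((1:ℝ)/2)) *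
        Gf (HP z) u := by
    intro z
    induction z with
    | zero =>
        funext u
        have hπ : Real.pi ^ ((1:ℝ)/2) * Real.pi ^ (-(1:ℝ)/2) = 1 := rpow_sigma_kappa Real.pi_pos
        simp only [iteratedDeriv_zero, pow_zero, Nat.factorial_zero, Nat.cast_one, mul_one,
          one_mul, Real.one_rpow, Gf, HP, Polynomial.eval_C]
        rw [show Real.pi ^ ((1:ℝ)/2) * (Real.pi ^ (-(1:ℝ)/2) * Real.exp (-u^2))
            = (Real.pi ^ ((1:ℝ)/2) * Real.pi ^ (-(1:ℝ)/2)) * Real.exp (-u^2) by ring, hπ]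
        ring
    | succ z ih =>
        rw [iteratedDeriv_succ, ih]
        funext u
        rw [deriv_const_mul _ ((hasDerivAt_Gf (HP z) u).differentiableAt),
          (hasDerivAt_Gf (HP z) u).deriv]
        have hpos : (0:ℝ) < 2*((z:ℝ)+1) := by positivity
        have hσκ : (2*((z:ℝ)+1)) ^ ((1:ℝ)/2) * (2*((z:ℝ)+1)) ^ (-(1:ℝ)/2) = 1 :=
          rpow_sigma_kappa hpos
        have harg : (2:ℝ)^(z+1) * ((Nat.factorial (z+1) : ℕ) : ℝ)
            = (2*((z:ℝ)+1)) * ((2:ℝ)^z * (Nat.factorial z : ℝ)) := by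
          push_cast [Nat.factorial_succ]
          ring
        have hc : ((2:ℝ)^(z+1) * ((Nat.factorial (z+1) : ℕ) : ℝ)) ^ ((1:ℝ)/2)
            = (2*((z:ℝ)+1)) ^ ((1:ℝ)/2) * ((2:ℝ)^z * (Nat.factorial z : ℝ)) ^ ((1:ℝ)/2) := by
          rw [harg, Real.mul_rpow (le_of_lt hpos) (by positivity)]
        rw [hc]
        simp only [Gf, HP_succ_def, Polynomial.eval_mul, Polynomial.eval_C,
          Polynomial.eval_sub, Polynomial.eval_mul, Polynomial.eval_X, Polynomial.eval_ofNat]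
        linear_combination ((-1:ℝ)^z * ((2:ℝ)^z * (Nat.factorial z : ℝ)) ^ ((1:ℝ)/2) *
          Real.pi ^ ((1:ℝ)/2) *
          (2 * u * Polynomial.eval u (HP z) - Polynomial.eval u (derivative (HP z))) *
          Real.exp (-u^2)) * hσκ
  funext u
  unfold hermiteFun
  rw [iterated_gauss z]
  simp only [Gh, Gf]
  have h1 : ((2:ℝ)^z * (Nat.factorial z : ℝ)) ^ (-(1:ℝ)/2)
      * ((2:ℝ)^z * (Nat.factorial z : ℝ)) ^ ((1:ℝ)/2) = 1 := by
    rw [← Real.rpow_add (by positivity)]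
    norm_num
  have h2 : Real.pi ^ (-(1:ℝ)/2) * Real.pi ^ ((1:ℝ)/2) = 1 := by
    rw [← Real.rpow_add Real.pi_pos]
    norm_num
  have h3 : ((-1:ℝ))^z * (-1:ℝ)^z = 1 := by
    rw [← mul_pow]
    norm_num
  have hE : Real.exp (u^2/2) * Real.exp (-u^2) = Real.exp (-(u^2/2)) := by
    rw [← Real.exp_add]
    ring_nf
  linear_combination ((-1:ℝ)^z * (-1:ℝ)^z * Real.pi ^ (-(1:ℝ)/2) * Real.pi ^ ((1:ℝ)/2) *
      Real.exp (u^2/2) * Real.exp (-u^2) * Polynomial.eval u (HP z)) * h1 +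
    (Real.pi ^ (-(1:ℝ)/2) * Real.pi ^ ((1:ℝ)/2) *
      Real.exp (u^2/2) * Real.exp (-u^2) * Polynomial.eval u (HP z)) * h3 +
    (Real.exp (u^2/2) * Real.exp (-u^2) * Polynomial.eval u (HP z)) * h2 +
    (Polynomial.eval u (HP z)) * hE

lemma sq_Gh (q : Polynomial ℝ) (u : ℝ) : (Gh q u)^2 = Gf (q^2) u := by
  unfold Gh Gf
  rw [Polynomial.eval_pow, mul_pow, sq (Real.exp _), ← Real.exp_add]
  ring_nf

lemma integral_Gf_add (q r : Polynomial ℝ) :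
    ∫ u : ℝ, Gf (q + r) u = (∫ u : ℝ, Gf q u) + ∫ u : ℝ, Gf r u := by
  have h : ∀ u : ℝ, Gf (q + r) u = Gf q u + Gf r u := by
    intro u
    unfold Gf
    rw [Polynomial.eval_add]
    ring
  simp only [h]
  exact integral_add (integrable_Gf q) (integrable_Gf r)

lemma integral_Gf_smul (c : ℝ) (q : Polynomial ℝ) :
    ∫ u : ℝ, Gf (Polynomial.C c * q) u = c * ∫ u : ℝ, Gf q u := by
  have h : ∀ u : ℝ, Gf (Polynomial.C c * q) u = c * Gf q u := by
    intro u
    unfold Gf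
    rw [Polynomial.eval_mul, Polynomial.eval_C]
    ring
  simp only [h]
  exact integral_const_mul c _

lemma integral_Gf_sq_nonneg (q : Polynomial ℝ) : 0 ≤ ∫ u : ℝ, Gf (q^2) u := by
  apply integral_nonneg
  intro u
  unfold Gf
  rw [Polynomial.eval_pow]
  positivity

/-- L² norm recursion: `∫ h_{z+1}² = ∫ h_z²`. -/
lemma Nfun_succ (z : ℕ) :
    ∫ u : ℝ, Gf ((HP (z+1))^2) u = ∫ u : ℝ, Gf ((HP z)^2) u := by
  have hpos : (0:ℝ) < 2*((z:ℝ)+1) := by positivity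
  have hode := (HP_ode_derivP z).1
  rw [show Polynomial.C (2*(z:ℝ)) = 2 * Polynomial.C (z:ℝ) by rw [map_mul, map_ofNat]] at hode
  set p := HP z with hp
  set s0 : Polynomial ℝ := p * derivative p - 2 * X * p^2 with hs0
  have r_sq : (2*X*p - derivative p)^2
      = Polynomial.C (2*((z:ℝ)+1)) * p^2 + (derivative s0 - 2*X*s0) := by
    rw [hs0]
    simp only [derivative_sub, derivative_mul, derivative_pow, derivative_X, derivative_ofNat,
      map_mul, map_add, map_ofNat, map_one, Nat.cast_ofNat, pow_one, mul_one, one_mul]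
    linear_combination (-p) * hode
  have hκκ : (2*((z:ℝ)+1)) ^ (-(1:ℝ)/2) * (2*((z:ℝ)+1)) ^ (-(1:ℝ)/2)
      = (2*((z:ℝ)+1))⁻¹ := by
    rw [← Real.rpow_add hpos]
    norm_num [Real.rpow_neg_one]
  have polyid : (HP (z+1))^2 = p^2 + Polynomial.C ((2*((z:ℝ)+1))⁻¹) * (derivative s0 - 2*X*s0) := by
    rw [HP_succ_def, mul_pow, ← map_pow, sq ((2*((z:ℝ)+1)) ^ (-(1:ℝ)/2)), hκκ, r_sq]
    rw [mul_add, ← mul_assoc, ← map_mul, inv_mul_cancel₀ (ne_of_gt hpos), map_one, one_mul]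
  rw [polyid, integral_Gf_add, integral_Gf_smul, integral_Gf_D]
  ring

lemma Nfun_le_one (z : ℕ) : ∫ u : ℝ, Gf ((HP z)^2) u ≤ 1 := by
  induction z with
  | zero =>
      have h : ∀ u : ℝ, Gf ((HP 0)^2) u
          = (Real.pi ^ (-(1:ℝ)/2))^2 * Real.exp (-(1:ℝ)*u^2) := by
        intro u
        unfold Gf
        simp only [HP, Polynomial.eval_pow, Polynomial.eval_C]
        ring_nf
      simp only [h]
      rw [integral_const_mul, integral_gaussian]
      have hsqrt : Real.sqrt (Real.pi / 1) = Real.pi ^ ((1:ℝ)/2) := by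
        rw [div_one, Real.sqrt_eq_rpow]
      have hsq : (Real.pi ^ (-(1:ℝ)/2))^2 = Real.pi ^ (-(1:ℝ)) := by
        rw [sq, ← Real.rpow_add Real.pi_pos]
        norm_num
      rw [hsqrt, hsq, ← Real.rpow_add Real.pi_pos]
      have hpi : (1:ℝ) ≤ Real.pi := by nlinarith [Real.pi_gt_three]
      apply Real.rpow_le_one_of_one_le_of_nonpos hpi
      norm_num
  | succ z ih =>
      rw [Nfun_succ]
      exact ih

lemma Nfun_nonneg (z : ℕ) : 0 ≤ ∫ u : ℝ, Gf ((HP z)^2) u := by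
  exact integral_Gf_sq_nonneg (HP z)

/-- second moment bound -/
lemma Mfun_le (z : ℕ) :
    ∫ u : ℝ, Gf (X^2 * (HP z)^2) u ≤ 2*(z:ℝ)+1 := by
  have hode := (HP_ode_derivP z).1
  rw [show Polynomial.C (2*(z:ℝ)) = 2 * Polynomial.C (z:ℝ) by rw [map_mul, map_ofNat]] at hode
  set p := HP z with hp
  set s1 : Polynomial ℝ := p * derivative p - X * p^2 with hs1
  have polyid : X^2 * p^2 + (derivative p - X*p)^2
      = Polynomial.C (2*(z:ℝ)+1) * p^2 + (derivative s1 - 2*X*s1) := by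
    rw [hs1]
    simp only [derivative_sub, derivative_mul, derivative_pow, derivative_X, derivative_ofNat,
      map_mul, map_add, map_ofNat, map_one, Nat.cast_ofNat, pow_one, mul_one, one_mul]
    linear_combination (-p) * hode
  have hint := congrArg (fun q : Polynomial ℝ => ∫ u : ℝ, Gf q u) polyid
  simp only [integral_Gf_add, integral_Gf_smul, integral_Gf_D] at hint
  have h1 : 0 ≤ ∫ u : ℝ, Gf ((derivative p - X*p)^2) u := integral_Gf_sq_nonneg _
  have h2 : ∫ u : ℝ, Gf (p^2) u ≤ 1 := Nfun_le_one z
  have h3 : 0 ≤ ∫ u : ℝ, Gf (p^2) u := integral_Gf_sq_nonneg _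
  have h4 : (0:ℝ) ≤ 2*(z:ℝ)+1 := by positivity
  nlinarith [hint]

/-- The L¹ bound for Hermite functions. -/
lemma L1_bound (z : ℕ) :
    ∫ u : ℝ, |Gh (HP z) u| ≤ 4 * (1+(z:ℝ)) ^ ((1:ℝ)/4) := by
  set p := HP z with hp
  have hR2pos : (0:ℝ) < 1+(z:ℝ) := by positivity
  set t : ℝ := (1+(z:ℝ)) ^ ((1:ℝ)/4) with ht
  set R : ℝ := (1+(z:ℝ)) ^ ((1:ℝ)/2) with hR
  have htpos : 0 < t := Real.rpow_pos_of_pos hR2pos _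
  have hRpos : 0 < R := Real.rpow_pos_of_pos hR2pos _
  have hRsq : R^2 = 1+(z:ℝ) := by
    rw [hR, sq, ← Real.rpow_add hR2pos]
    norm_num
  -- the dominating function
  set g : ℝ → ℝ := fun u => (1/2) * (t * Gf (p^2) u + (t/(1+(z:ℝ))) * Gf (X^2*p^2) u
      + t⁻¹ * (1+(u/R)^2)⁻¹) with hg
  have hgint : Integrable g := by
    apply Integrable.const_mul
    exact (((integrable_Gf (p^2)).const_mul t).add
      ((integrable_Gf (X^2*p^2)).const_mul _)).add
      ((integrable_inv_one_add_sq.comp_div (ne_of_gt hRpos)).const_mul _)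
  have hXval : ∀ u : ℝ, Gf (X^2*p^2) u = u^2 * Gf (p^2) u := by
    intro u
    unfold Gf
    simp only [Polynomial.eval_mul, Polynomial.eval_pow, Polynomial.eval_X]
    ring
  have hpoint : ∀ u : ℝ, |Gh p u| ≤ g u := by
    intro u
    have hDiv : (u/R)^2 = u^2/(1+(z:ℝ)) := by
      rw [div_pow, hRsq]
    set A : ℝ := t * (1 + u^2/(1+(z:ℝ))) with hA
    have hApos : 0 < A := by
      have : 0 < 1 + u^2/(1+(z:ℝ)) := by positivity
      exact mul_pos htpos this
    have hBpos : 0 < A⁻¹ := inv_pos.mpr hApos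
    have hAB : A * A⁻¹ = 1 := mul_inv_cancel₀ (ne_of_gt hApos)
    have hBA : A⁻¹ * A = 1 := inv_mul_cancel₀ (ne_of_gt hApos)
    have key : |Gh p u| ≤ (1/2) * (A * (Gh p u)^2 + A⁻¹) := by
      have e2 : A⁻¹*A^2*|Gh p u|^2 = A*|Gh p u|^2 := by
        field_simp
      have e3 : A⁻¹*A*|Gh p u| = |Gh p u| := by
        rw [hBA, one_mul]
      nlinarith [mul_nonneg hBpos.le (sq_nonneg (A*|Gh p u| - 1)), e2, e3, sq_abs (Gh p u)]
    have hval : (1/2) * (A * (Gh p u)^2 + A⁻¹) = g u := by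
      rw [hg, hA]
      simp only []
      rw [← sq_Gh p u, hXval, ← sq_Gh p u, hDiv]
      have h1 : t * (1 + u^2/(1+(z:ℝ))) * (Gh p u)^2
          = t * (Gh p u)^2 + t/(1+(z:ℝ)) * (u^2 * (Gh p u)^2) := by
        field_simp
      have h2 : (t * (1 + u^2/(1+(z:ℝ))))⁻¹ = t⁻¹ * (1 + u^2/(1+(z:ℝ)))⁻¹ := by
        rw [mul_inv]
      rw [h1, h2]
    rw [← hval]
    exact key
  have hmono : ∫ u : ℝ, |Gh p u| ≤ ∫ u : ℝ, g u :=
    integral_mono_of_nonneg (Filter.Eventually.of_forall fun u => abs_nonneg _) hgint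
      (Filter.Eventually.of_forall hpoint)
  -- compute/bound ∫ g
  have hcauchy : ∫ u : ℝ, (1+(u/R)^2)⁻¹ = R * Real.pi := by
    have := MeasureTheory.Measure.integral_comp_div (g := fun x : ℝ => (1+x^2)⁻¹) R
    rw [integral_univ_inv_one_add_sq] at this
    rw [this, abs_of_pos hRpos, smul_eq_mul]
  have hgval : ∫ u : ℝ, g u = (1/2) * (t * (∫ u : ℝ, Gf (p^2) u)
      + (t/(1+(z:ℝ))) * (∫ u : ℝ, Gf (X^2*p^2) u) + t⁻¹ * (R * Real.pi)) := by
    have i1 : Integrable (fun u : ℝ => t * Gf (p^2) u) := (integrable_Gf _).const_mul t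
    have i2 : Integrable (fun u : ℝ => t/(1+(z:ℝ)) * Gf (X^2*p^2) u) :=
      (integrable_Gf _).const_mul _
    have i3 : Integrable (fun u : ℝ => t⁻¹ * (1+(u/R)^2)⁻¹) :=
      ((integrable_inv_one_add_sq).comp_div (ne_of_gt hRpos)).const_mul _
    have i12 : Integrable (fun u : ℝ => t * Gf (p^2) u + t/(1+(z:ℝ)) * Gf (X^2*p^2) u) :=
      i1.add i2
    rw [hg]
    rw [integral_const_mul]
    rw [integral_add i12 i3, integral_add i1 i2,
      integral_const_mul, integral_const_mul, integral_const_mul, hcauchy]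
  have hN1 : ∫ u : ℝ, Gf (p^2) u ≤ 1 := Nfun_le_one z
  have hN0 : 0 ≤ ∫ u : ℝ, Gf (p^2) u := integral_Gf_sq_nonneg _
  have hM1 : ∫ u : ℝ, Gf (X^2*p^2) u ≤ 2*(z:ℝ)+1 := Mfun_le z
  have hM0 : 0 ≤ ∫ u : ℝ, Gf (X^2*p^2) u := by
    have : X^2*p^2 = (X*p)^2 := by ring
    rw [this]
    exact integral_Gf_sq_nonneg _
  have htR : t⁻¹ * R = t := by
    rw [ht, hR, ← Real.rpow_neg (le_of_lt hR2pos), ← Real.rpow_add hR2pos]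
    norm_num
  have hpi : Real.pi ≤ 3.15 := le_of_lt Real.pi_lt_d2
  have hpi0 : 0 < Real.pi := Real.pi_pos
  calc ∫ u : ℝ, |Gh p u| ≤ ∫ u : ℝ, g u := hmono
    _ = (1/2) * (t * (∫ u : ℝ, Gf (p^2) u)
      + (t/(1+(z:ℝ))) * (∫ u : ℝ, Gf (X^2*p^2) u) + t⁻¹ * (R * Real.pi)) := hgval
    _ ≤ (1/2) * (t * 1 + (t/(1+(z:ℝ))) * (2*(z:ℝ)+1) + t * Real.pi) := by
        have e1 : t * (∫ u : ℝ, Gf (p^2) u) ≤ t * 1 :=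
          mul_le_mul_of_nonneg_left hN1 htpos.le
        have e2 : (t/(1+(z:ℝ))) * (∫ u : ℝ, Gf (X^2*p^2) u)
            ≤ (t/(1+(z:ℝ))) * (2*(z:ℝ)+1) :=
          mul_le_mul_of_nonneg_left hM1 (by positivity)
        have e3 : t⁻¹ * (R * Real.pi) = t * Real.pi := by
          rw [← mul_assoc, htR]
        linarith
    _ ≤ (1/2) * (t + 2*t + 3.15*t) := by
        have e4 : (t/(1+(z:ℝ))) * (2*(z:ℝ)+1) ≤ 2*t := by
          rw [div_mul_eq_mul_div, div_le_iff₀ hR2pos]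
          nlinarith [htpos.le]
        have e5 : t * Real.pi ≤ 3.15 * t := by
          nlinarith [htpos.le]
        linarith
    _ ≤ 4 * (1+(z:ℝ)) ^ ((1:ℝ)/4) := by
        rw [← ht]
        linarith [htpos.le]

lemma iteratedDeriv_comb (i : ℕ) (a b : ℝ) (f g : ℝ → ℝ)
    (hf : ContDiff ℝ (⊤:ℕ∞) f) (hg : ContDiff ℝ (⊤:ℕ∞) g) :
    iteratedDeriv i (fun u => a * f u - b * g u) =
      fun u => a * iteratedDeriv i f u - b * iteratedDeriv i g u := by
  induction i generalizing f g with
  | zero => simp [iteratedDeriv_zero]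
  | succ i ih =>
      have hf' : ContDiff ℝ (⊤:ℕ∞) (deriv f) := (contDiff_infty_iff_deriv.mp hf).2
      have hg' : ContDiff ℝ (⊤:ℕ∞) (deriv g) := (contDiff_infty_iff_deriv.mp hg).2
      have hdf : Differentiable ℝ f := (contDiff_infty_iff_deriv.mp hf).1
      have hdg : Differentiable ℝ g := (contDiff_infty_iff_deriv.mp hg).1
      rw [iteratedDeriv_succ', iteratedDeriv_succ' (f := f), iteratedDeriv_succ' (f := g)]
      have hcomb : deriv (fun u => a * f u - b * g u)
          = fun u => a * deriv f u - b * deriv g u := by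
        funext u
        rw [deriv_fun_sub ((hdf u).const_mul a) ((hdg u).const_mul b),
          deriv_const_mul a (hdf u), deriv_const_mul b (hdg u)]
      rw [hcomb, ih (deriv f) (deriv g) hf' hg']

lemma four_rpow_half : (4:ℝ) ^ ((1:ℝ)/2) = 2 := by
  rw [show (4:ℝ) = 2^(2:ℕ) by norm_num, ← Real.rpow_natCast (2:ℝ) 2, ← Real.rpow_mul (by norm_num)]
  norm_num

lemma rpow_double (t : ℝ) (ht : 0 ≤ t) :
    (2*t) ^ ((1:ℝ)/2) = 2 * (t/2) ^ ((1:ℝ)/2) := by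
  rw [show 2*t = 4*(t/2) by ring, Real.mul_rpow (by norm_num) (by positivity), four_rpow_half]

lemma scalar_cl (t : ℝ) (ht : 0 ≤ t) :
    (t/2) ^ ((1:ℝ)/2) * 2 = (2*t) ^ ((1:ℝ)/2) := by
  rw [rpow_double t ht]
  ring

lemma scalar_halfkappa (t : ℝ) (ht : 0 < t) :
    (t/2) ^ ((1:ℝ)/2) * (2*t) ^ (-(1:ℝ)/2) * 2 = 1 := by
  have h := rpow_sigma_kappa (t := 2*t) (by positivity)
  rw [rpow_double t ht.le] at h
  linarith [h]

lemma deriv_hermiteFun (z : ℕ) :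
    deriv (hermiteFun z) = fun u =>
      ((z:ℝ)/2) ^ ((1:ℝ)/2) * hermiteFun (z-1) u
        - (((z:ℝ)+1)/2) ^ ((1:ℝ)/2) * hermiteFun (z+1) u := by
  rw [hermiteFun_eq_Gh z, deriv_Gh]
  have polydh : derivative (HP z) - X * HP z
      = Polynomial.C (((z:ℝ)/2) ^ ((1:ℝ)/2)) * HP (z-1)
        - Polynomial.C ((((z:ℝ)+1)/2) ^ ((1:ℝ)/2)) * HP (z+1) := by
    cases z with
    | zero =>
        have hcl : (((0:ℕ):ℝ)/2) ^ ((1:ℝ)/2) = 0 := by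
          norm_num
        have hd0 : derivative (HP 0) = 0 := by
          simp [HP]
        rw [hcl, map_zero, zero_mul, hd0, HP_succ_def 0, hd0]
        have r1h : Polynomial.C (((((0:ℕ):ℝ)+1)/2) ^ ((1:ℝ)/2))
            * Polynomial.C ((2*(((0:ℕ):ℝ)+1)) ^ (-(1:ℝ)/2)) = Polynomial.C (1/2 : ℝ) := by
          rw [← map_mul]
          congr 1
          have := scalar_halfkappa ((((0:ℕ):ℝ)+1)) (by norm_num)
          linarith
        have r3 : (2:ℝ[X]) * Polynomial.C (1/2 : ℝ) = 1 := by
          rw [show (2:ℝ[X]) = Polynomial.C (2:ℝ) from (map_ofNat _ 2).symm, ← map_mul]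
          norm_num
        linear_combination (2*X*HP 0) * r1h + (X*HP 0) * r3
    | succ w =>
        have hw : (0:ℝ) ≤ (w:ℝ)+1 := by positivity
        have hd := (HP_ode_derivP w).2
        push_cast
        rw [hd, HP_succ_def (w+1), hd]
        push_cast
        set σ₁ : ℝ := (2*((w:ℝ)+1)) ^ ((1:ℝ)/2) with hσ₁
        set κ₂ : ℝ := (2*((w:ℝ)+1+1)) ^ (-(1:ℝ)/2) with hκ₂
        set cl : ℝ := (((w:ℝ)+1)/2) ^ ((1:ℝ)/2) with hcl
        set ch : ℝ := (((w:ℝ)+1+1)/2) ^ ((1:ℝ)/2) with hch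
        have r1h : Polynomial.C ch * Polynomial.C κ₂ = Polynomial.C (1/2 : ℝ) := by
          rw [← map_mul]
          congr 1
          have := scalar_halfkappa ((w:ℝ)+1+1) (by positivity)
          rw [hch, hκ₂]
          linarith
        have r2h : Polynomial.C cl = Polynomial.C σ₁ * Polynomial.C (1/2 : ℝ) := by
          rw [← map_mul]
          congr 1
          have := scalar_cl ((w:ℝ)+1) hw
          rw [hcl, hσ₁]
          linarith
        have r3 : (2:ℝ[X]) * Polynomial.C (1/2 : ℝ) = 1 := by
          rw [show (2:ℝ[X]) = Polynomial.C (2:ℝ) from (map_ofNat _ 2).symm, ← map_mul]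
          norm_num
        linear_combination (2*X*(HP (w+1)) - Polynomial.C σ₁ * HP w) * r1h
          + (-(HP w)) * r2h + (X*(HP (w+1)) - Polynomial.C σ₁ * HP w) * r3
  funext u
  rw [hermiteFun_eq_Gh (z-1), hermiteFun_eq_Gh (z+1)]
  unfold Gh
  rw [polydh]
  simp only [Polynomial.eval_sub, Polynomial.eval_mul, Polynomial.eval_C]
  ring

lemma num_step (i : ℕ) (hi3 : (i:ℝ) ≤ 3) (z : ℕ) :
    ((z:ℝ)/2) ^ ((1:ℝ)/2) * (4*5^i * (1+((z-1 : ℕ):ℝ)) ^ ((2*(i:ℝ)+1)/4))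
      + (((z:ℝ)+1)/2) ^ ((1:ℝ)/2) * (4*5^i * (1+((z+1 : ℕ):ℝ)) ^ ((2*(i:ℝ)+1)/4))
    ≤ 4*5^(i+1) * (1+(z:ℝ)) ^ ((2*(((i+1):ℕ):ℝ)+1)/4) := by
  have h5 : (0:ℝ) < 5^i := by positivity
  have hepos : (0:ℝ) ≤ (2*(i:ℝ)+1)/4 := by positivity
  have he2 : (2*(i:ℝ)+1)/4 ≤ 2 := by linarith
  have h24 : (2:ℝ)^(2:ℝ) = 4 := by
    rw [show (2:ℝ) = ((2:ℕ):ℝ) from by norm_num, Real.rpow_natCast]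
    norm_num
  cases z with
  | zero =>
      have hcl : (((0:ℕ):ℝ)/2) ^ ((1:ℝ)/2) = 0 := by
        norm_num
      have hch : ((((0:ℕ):ℝ)+1)/2) ^ ((1:ℝ)/2) ≤ 1 :=
        Real.rpow_le_one (by norm_num) (by norm_num) (by norm_num)
      have hch0 : (0:ℝ) ≤ ((((0:ℕ):ℝ)+1)/2) ^ ((1:ℝ)/2) := Real.rpow_nonneg (by norm_num) _
      have h2e : (1+(((0+1):ℕ):ℝ)) ^ ((2*(i:ℝ)+1)/4) ≤ 4 := by
        have : (1+(((0+1):ℕ):ℝ)) = 2 := by norm_num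
        rw [this]
        calc (2:ℝ) ^ ((2*(i:ℝ)+1)/4) ≤ (2:ℝ)^(2:ℝ) :=
              Real.rpow_le_rpow_of_exponent_le (by norm_num) he2
          _ = 4 := h24
      have h2e0 : (0:ℝ) ≤ (1+(((0+1):ℕ):ℝ)) ^ ((2*(i:ℝ)+1)/4) :=
        Real.rpow_nonneg (by norm_num) _
      have hone : (1+((0:ℕ):ℝ)) ^ ((2*(((i+1):ℕ):ℝ)+1)/4) = 1 := by
        norm_num
      rw [hcl, hone, zero_mul, zero_add, mul_one]
      have ht2 : ((((0:ℕ):ℝ)+1)/2) ^ ((1:ℝ)/2) * (4*5^i * (1+(((0+1):ℕ):ℝ)) ^ ((2*(i:ℝ)+1)/4))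
          ≤ 1 * (4*5^i*4) := by
        apply mul_le_mul hch _ (by positivity) (by norm_num)
        nlinarith [h2e, h5]
      calc ((((0:ℕ):ℝ)+1)/2) ^ ((1:ℝ)/2) * (4*5^i * (1+(((0+1):ℕ):ℝ)) ^ ((2*(i:ℝ)+1)/4))
          ≤ 1 * (4*5^i*4) := ht2
        _ ≤ 4*5^(i+1) := by
            rw [pow_succ]
            nlinarith [h5]
  | succ w =>
      set D : ℝ := 1+((w+1 : ℕ):ℝ) with hD
      have hDval : D = (w:ℝ)+2 := by
        rw [hD]
        push_cast
        ring
      have hDpos : (0:ℝ) < D := by rw [hDval]; positivity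
      have hD1 : (1:ℝ) ≤ D := by
        rw [hDval]
        have : (0:ℝ) ≤ (w:ℝ) := Nat.cast_nonneg w
        linarith
      set e : ℝ := (2*(i:ℝ)+1)/4 with he
      set c : ℝ := (D/2) ^ ((1:ℝ)/2) with hc
      have hc0 : 0 ≤ c := Real.rpow_nonneg (by positivity) _
      have hcD : c ≤ D ^ ((1:ℝ)/2) :=
        Real.rpow_le_rpow (by positivity) (by linarith) (by norm_num)
      -- first term
      have hcl_le : (((w+1 : ℕ):ℝ)/2) ^ ((1:ℝ)/2) ≤ c := by
        apply Real.rpow_le_rpow (by positivity) _ (by norm_num)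
        rw [hDval]
        push_cast
        linarith
      have hcl0 : (0:ℝ) ≤ (((w+1 : ℕ):ℝ)/2) ^ ((1:ℝ)/2) := Real.rpow_nonneg (by positivity) _
      have hB1 : (1+(((w+1)-1 : ℕ):ℝ)) ^ e ≤ D ^ e := by
        apply Real.rpow_le_rpow (by positivity) _ hepos
        rw [show ((w+1)-1 : ℕ) = w from rfl, hDval]
        push_cast
        linarith
      have hB10 : (0:ℝ) ≤ (1+(((w+1)-1 : ℕ):ℝ)) ^ e := Real.rpow_nonneg (by positivity) _
      -- second term
      have hch_eq : (((((w+1) : ℕ):ℝ)+1)/2) ^ ((1:ℝ)/2) = c := by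
        rw [hc, hDval]
        push_cast
        ring_nf
      have hB2 : (1+(((w+1)+1 : ℕ):ℝ)) ^ e ≤ 4 * D ^ e := by
        have step1 : (1+(((w+1)+1 : ℕ):ℝ)) ^ e ≤ (2*D) ^ e := by
          apply Real.rpow_le_rpow (by positivity) _ hepos
          rw [hDval]
          push_cast
          have : (0:ℝ) ≤ (w:ℝ) := Nat.cast_nonneg w
          linarith
        have step2 : (2*D) ^ e = 2 ^ e * D ^ e :=
          Real.mul_rpow (by norm_num) hDpos.le
        have step3 : (2:ℝ) ^ e ≤ 4 := by
          calc (2:ℝ) ^ e ≤ (2:ℝ)^(2:ℝ) := Real.rpow_le_rpow_of_exponent_le (by norm_num) he2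
            _ = 4 := h24
        have hDe : (0:ℝ) ≤ D ^ e := Real.rpow_nonneg hDpos.le _
        calc (1+(((w+1)+1 : ℕ):ℝ)) ^ e ≤ 2 ^ e * D ^ e := by rw [← step2]; exact step1
          _ ≤ 4 * D ^ e := mul_le_mul_of_nonneg_right step3 hDe
      have hDe : (0:ℝ) ≤ D ^ e := Real.rpow_nonneg hDpos.le _
      have hfin : D ^ ((1:ℝ)/2) * D ^ e = D ^ ((2*(((i+1):ℕ):ℝ)+1)/4) := by
        rw [← Real.rpow_add hDpos]
        congr 1
        push_cast
        ring
      have ht1 : (((w+1 : ℕ):ℝ)/2) ^ ((1:ℝ)/2) * (4*5^i * (1+(((w+1)-1 : ℕ):ℝ)) ^ e)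
          ≤ c * (4*5^i * D ^ e) := by
        apply mul_le_mul hcl_le _ (by positivity) hc0
        nlinarith [hB1, h5]
      have ht2 : (((((w+1) : ℕ):ℝ)+1)/2) ^ ((1:ℝ)/2) * (4*5^i * (1+(((w+1)+1 : ℕ):ℝ)) ^ e)
          = c * (4*5^i * (1+(((w+1)+1 : ℕ):ℝ)) ^ e) := by rw [hch_eq]
      have ht2' : c * (4*5^i * (1+(((w+1)+1 : ℕ):ℝ)) ^ e) ≤ c * (4*5^i * (4 * D ^ e)) := by
        apply mul_le_mul_of_nonneg_left _ hc0
        nlinarith [hB2, h5]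
      have hsum : c * (4*5^i * D ^ e) + c * (4*5^i * (4 * D ^ e)) = c * (4*5^(i+1) * D ^ e) := by
        rw [pow_succ]
        ring
      have hlast : c * (4*5^(i+1) * D ^ e) ≤ D ^ ((1:ℝ)/2) * (4*5^(i+1) * D ^ e) := by
        apply mul_le_mul_of_nonneg_right hcD
        positivity
      calc (((w+1 : ℕ):ℝ)/2) ^ ((1:ℝ)/2) * (4*5^i * (1+(((w+1)-1 : ℕ):ℝ)) ^ e)
            + (((((w+1) : ℕ):ℝ)+1)/2) ^ ((1:ℝ)/2) * (4*5^i * (1+(((w+1)+1 : ℕ):ℝ)) ^ e)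
          ≤ c * (4*5^i * D ^ e) + c * (4*5^i * (4 * D ^ e)) := by
            rw [ht2]
            exact add_le_add ht1 ht2'
        _ = c * (4*5^(i+1) * D ^ e) := hsum
        _ ≤ D ^ ((1:ℝ)/2) * (4*5^(i+1) * D ^ e) := hlast
        _ = 4*5^(i+1) * D ^ ((2*(((i+1):ℕ):ℝ)+1)/4) := by
            rw [← hfin]
            ring

lemma main_bound (i : ℕ) (hi : i ≤ 4) (z : ℕ) :
    ∫ u : ℝ, |iteratedDeriv i (hermiteFun z) u| ≤
      4 * 5^i * (1+(z:ℝ)) ^ ((2*(i:ℝ)+1)/4) := by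
  induction i generalizing z with
  | zero =>
      rw [iteratedDeriv_zero, hermiteFun_eq_Gh z]
      calc ∫ u : ℝ, |Gh (HP z) u| ≤ 4 * (1+(z:ℝ)) ^ ((1:ℝ)/4) := L1_bound z
        _ = 4 * 5^0 * (1+(z:ℝ)) ^ ((2*((0:ℕ):ℝ)+1)/4) := by norm_num
  | succ i ih =>
      have hi' : i ≤ 4 := le_trans (Nat.le_succ i) hi
      have hi3 : (i:ℝ) ≤ 3 := by
        have h3 : i ≤ 3 := Nat.lt_succ_iff.mp hi
        exact_mod_cast h3
      have hcdiff : ∀ w : ℕ, ContDiff ℝ (⊤:ℕ∞) (hermiteFun w) := by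
        intro w
        rw [hermiteFun_eq_Gh w]
        exact contDiff_Gh _
      have habs_int : ∀ (j : ℕ) (w : ℕ),
          Integrable (fun u => |iteratedDeriv j (hermiteFun w) u|) := by
        intro j w
        have hpoly : ∃ q : Polynomial ℝ, iteratedDeriv j (hermiteFun w) = Gh q := by
          induction j with
          | zero => exact ⟨HP w, by rw [iteratedDeriv_zero, hermiteFun_eq_Gh w]⟩
          | succ j ihq =>
              obtain ⟨q, hq⟩ := ihq
              exact ⟨derivative q - X*q, by rw [iteratedDeriv_succ, hq, deriv_Gh]⟩
        obtain ⟨q, hq⟩ := hpoly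
        rw [hq]
        exact (integrable_Gh q).abs
      set cl : ℝ := ((z:ℝ)/2) ^ ((1:ℝ)/2) with hcl
      set ch : ℝ := (((z:ℝ)+1)/2) ^ ((1:ℝ)/2) with hch
      have hcl0 : 0 ≤ cl := Real.rpow_nonneg (by positivity) _
      have hch0 : 0 ≤ ch := Real.rpow_nonneg (by positivity) _
      rw [iteratedDeriv_succ', deriv_hermiteFun z,
        iteratedDeriv_comb i cl ch (hermiteFun (z-1)) (hermiteFun (z+1))
          (hcdiff (z-1)) (hcdiff (z+1))]
      set F := iteratedDeriv i (hermiteFun (z-1)) with hF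
      set G := iteratedDeriv i (hermiteFun (z+1)) with hG
      have hpoint : ∀ u : ℝ, |cl * F u - ch * G u| ≤ cl * |F u| + ch * |G u| := by
        intro u
        calc |cl * F u - ch * G u| ≤ |cl * F u| + |ch * G u| := abs_sub _ _
          _ = cl * |F u| + ch * |G u| := by
              rw [abs_mul, abs_mul, abs_of_nonneg hcl0, abs_of_nonneg hch0]
      have hInt : Integrable (fun u => cl * |F u| + ch * |G u|) :=
        ((habs_int i (z-1)).const_mul cl).add ((habs_int i (z+1)).const_mul ch)
      have step1 : ∫ u : ℝ, |cl * F u - ch * G u| ≤ ∫ u : ℝ, (cl * |F u| + ch * |G u|) :=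
        integral_mono_of_nonneg (Filter.Eventually.of_forall fun u => abs_nonneg _)
          hInt (Filter.Eventually.of_forall hpoint)
      have step2 : ∫ u : ℝ, (cl * |F u| + ch * |G u|)
          = cl * (∫ u : ℝ, |F u|) + ch * (∫ u : ℝ, |G u|) := by
        rw [integral_add ((habs_int i (z-1)).const_mul cl) ((habs_int i (z+1)).const_mul ch),
          integral_const_mul, integral_const_mul]
      have step3 : cl * (∫ u : ℝ, |F u|) + ch * (∫ u : ℝ, |G u|)
          ≤ cl * (4*5^i * (1+((z-1 : ℕ):ℝ)) ^ ((2*(i:ℝ)+1)/4))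
            + ch * (4*5^i * (1+((z+1 : ℕ):ℝ)) ^ ((2*(i:ℝ)+1)/4)) := by
        have a1 := mul_le_mul_of_nonneg_left (ih hi' (z-1)) hcl0
        have a2 := mul_le_mul_of_nonneg_left (ih hi' (z+1)) hch0
        linarith
      exact le_trans step1 (le_trans step2.le (le_trans step3 (num_step i hi3 z)))

/-- There is a universal constant `C` such that for every `z ≥ 0` and every
`i ∈ {1,2,3,4}`, the `i`-th derivative of the Hermite function `h_z` satisfies
`∫ |h_z^{(i)}(u)| du ≤ C (1+z)^{(2i+1)/4}`. -/
theorem stmt_3 :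
    ∃ C : ℝ, ∀ z : ℕ, ∀ i : ℕ, 1 ≤ i → i ≤ 4 →
      (∫ u : ℝ, |iteratedDeriv i (hermiteFun z) u|) ≤
        C * (1 + (z : ℝ)) ^ ((2 * (i : ℝ) + 1) / 4) := by
  refine ⟨4 * 5^4, fun z i _ hi2 => ?_⟩
  calc ∫ u : ℝ, |iteratedDeriv i (hermiteFun z) u|
      ≤ 4 * 5^i * (1+(z:ℝ)) ^ ((2*(i:ℝ)+1)/4) := main_bound i hi2 z
    _ ≤ 4 * 5^4 * (1+(z:ℝ)) ^ ((2*(i:ℝ)+1)/4) := by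
        have h1 : (0:ℝ) ≤ (1+(z:ℝ)) ^ ((2*(i:ℝ)+1)/4) :=
          Real.rpow_nonneg (by positivity) _
        have h2 : (4:ℝ) * 5^i ≤ 4 * 5^4 := by
          have : (5:ℝ)^i ≤ 5^4 := pow_le_pow_right₀ (by norm_num) hi2
          linarith
        exact mul_le_mul_of_nonneg_right h2 h1
end

section
/- Let μ and ν be probability measures on a measurable space with μ absolutely continuous with respect to ν, and let H(μ;ν) = ∫ log(dμ/dν) dμ denote the relative entropy of μ with respect to ν. Then for every measurable set A with ν(A) > 0, μ(A) ≤ (log 2 + H(μ;ν)) / log(1 + 1/ν(A)). -/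
open MeasureTheory ENNReal

/-- The relative entropy `H(μ;ν) = ∫ log(dμ/dν) dμ ∈ [0,∞]`, expressed as the
(truncated) difference of the `∫⁻` of the positive and negative parts of the
log-likelihood ratio.  For probability measures `μ ≪ ν` the negative part is
always integrable, so this coincides with `∫ log(dμ/dν) dμ`, with value `∞`
exactly when the positive part has infinite integral. -/
noncomputable def relEntropy {α : Type*} [MeasurableSpace α] (μ ν : Measure α) : ℝ≥0∞ :=
  (∫⁻ x, ENNReal.ofReal (llr μ ν x) ∂μ) - (∫⁻ x, ENNReal.ofReal (-llr μ ν x) ∂μ)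

section aux

variable {α : Type*} [MeasurableSpace α] {μ ν : Measure α}

lemma aux_lintegral_inv_rnDeriv [SigmaFinite μ] [SigmaFinite ν] (hμν : μ ≪ ν) :
    ∫⁻ x, (μ.rnDeriv ν x)⁻¹ ∂μ ≤ ν Set.univ := by
  rw [← lintegral_rnDeriv_mul hμν (f := fun x => (μ.rnDeriv ν x)⁻¹) (Measure.measurable_rnDeriv μ ν).inv.aemeasurable]
  calc ∫⁻ x, μ.rnDeriv ν x * (μ.rnDeriv ν x)⁻¹ ∂ν
      ≤ ∫⁻ _, 1 ∂ν := lintegral_mono fun x => ENNReal.mul_inv_le_one _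
    _ = ν Set.univ := by simp

lemma aux_neg_llr_le [SigmaFinite μ] [SigmaFinite ν] (hμν : μ ≪ ν) :
    ∀ᵐ x ∂μ, ENNReal.ofReal (-llr μ ν x) ≤ (μ.rnDeriv ν x)⁻¹ := by
  filter_upwards [Measure.rnDeriv_pos hμν, hμν.ae_le (Measure.rnDeriv_lt_top μ ν)]
    with x hpos hlt
  have h0 : 0 < (μ.rnDeriv ν x).toReal := ENNReal.toReal_pos hpos.ne' hlt.ne
  have h1 : -llr μ ν x ≤ (μ.rnDeriv ν x).toReal⁻¹ := by
    rw [llr_def, ← Real.log_inv]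
    exact (Real.log_le_sub_one_of_pos (by positivity)).trans (by linarith)
  calc ENNReal.ofReal (-llr μ ν x) ≤ ENNReal.ofReal (μ.rnDeriv ν x).toReal⁻¹ :=
        ENNReal.ofReal_le_ofReal h1
    _ = ENNReal.ofReal ((μ.rnDeriv ν x)⁻¹).toReal := by rw [ENNReal.toReal_inv]
    _ = (μ.rnDeriv ν x)⁻¹ := ENNReal.ofReal_toReal (by simp [hpos.ne'])

lemma aux_neg_part_le [SigmaFinite μ] [SigmaFinite ν] (hμν : μ ≪ ν) :
    ∫⁻ x, ENNReal.ofReal (-llr μ ν x) ∂μ ≤ ν Set.univ :=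
  (lintegral_mono_ae (aux_neg_llr_le hμν)).trans (aux_lintegral_inv_rnDeriv hμν)

/-- Gibbs' inequality: the relative entropy integral is nonnegative. -/
lemma aux_gibbs [IsProbabilityMeasure μ] [IsProbabilityMeasure ν] (hμν : μ ≪ ν)
    (h_int : Integrable (llr μ ν) μ) : 0 ≤ ∫ x, llr μ ν x ∂μ := by
  have hinv : ∫⁻ x, (μ.rnDeriv ν x)⁻¹ ∂μ ≤ 1 := by
    simpa using aux_lintegral_inv_rnDeriv hμν
  have hinv_ne : ∫⁻ x, (μ.rnDeriv ν x)⁻¹ ∂μ ≠ ∞ := (hinv.trans_lt one_lt_top).ne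
  have hg_int : Integrable (fun x => ((μ.rnDeriv ν x)⁻¹).toReal) μ :=
    integrable_toReal_of_lintegral_ne_top (Measure.measurable_rnDeriv μ ν).inv.aemeasurable
      hinv_ne
  have hg_val : ∫ x, ((μ.rnDeriv ν x)⁻¹).toReal ∂μ ≤ 1 := by
    rw [integral_toReal (f := fun x => (μ.rnDeriv ν x)⁻¹) (Measure.measurable_rnDeriv μ ν).inv.aemeasurable
      (ae_lt_top (Measure.measurable_rnDeriv μ ν).inv hinv_ne)]
    exact ENNReal.toReal_le_of_le_ofReal one_pos.le (by simpa using hinv)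
  have hmono : ∫ x, -llr μ ν x ∂μ ≤ ∫ x, (((μ.rnDeriv ν x)⁻¹).toReal - 1) ∂μ := by
    refine integral_mono_ae h_int.neg (hg_int.sub (integrable_const 1)) ?_
    filter_upwards [Measure.rnDeriv_pos hμν, hμν.ae_le (Measure.rnDeriv_lt_top μ ν)]
      with x hpos hlt
    have h0 : 0 < (μ.rnDeriv ν x).toReal := ENNReal.toReal_pos hpos.ne' hlt.ne
    rw [ENNReal.toReal_inv, llr_def, ← Real.log_inv]
    exact Real.log_le_sub_one_of_pos (by positivity)
  rw [integral_neg] at hmono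
  rw [integral_sub hg_int (integrable_const 1)] at hmono
  simp only [integral_const, probReal_univ, ENNReal.toReal_one, smul_eq_mul, one_mul, mul_one] at hmono
  linarith

end aux

/-- Entropy inequality: for probability measures `μ ≪ ν` and any measurable `A`
with `ν(A) > 0`, one has `μ(A) ≤ (log 2 + H(μ;ν)) / log(1 + 1/ν(A))`. -/
theorem stmt_5 {α : Type*} [MeasurableSpace α] (μ ν : Measure α)
    [IsProbabilityMeasure μ] [IsProbabilityMeasure ν] (hμν : μ ≪ ν)
    (A : Set α) (hA : MeasurableSet A) (hνA : 0 < ν A) :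
    μ A ≤ (ENNReal.ofReal (Real.log 2) + relEntropy μ ν) /
      ENNReal.ofReal (Real.log (1 + 1 / (ν A).toReal)) := by
  set t : ℝ := (ν A).toReal with ht_def
  have htpos : 0 < t := ENNReal.toReal_pos hνA.ne' (measure_ne_top ν A)
  have ht1 : t ≤ 1 := by
    rw [ht_def, ← ENNReal.toReal_one]
    exact ENNReal.toReal_mono one_ne_top prob_le_one
  have hbase : (2:ℝ) ≤ 1 + 1 / t := by
    have : (1:ℝ) ≤ 1 / t := one_le_one_div htpos ht1
    linarith
  set c : ℝ := Real.log (1 + 1 / t) with hc_def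
  have hcpos : 0 < c := by
    show (0:ℝ) < Real.log (1 + 1 / t)
    exact Real.log_pos (by linarith)
  have hden0 : ENNReal.ofReal c ≠ 0 := (ENNReal.ofReal_pos.mpr hcpos).ne'
  have hden_top : ENNReal.ofReal c ≠ ∞ := ofReal_ne_top
  set P := ∫⁻ x, ENNReal.ofReal (llr μ ν x) ∂μ with hP_def
  set N := ∫⁻ x, ENNReal.ofReal (-llr μ ν x) ∂μ with hN_def
  have hN_le : N ≤ 1 := by simpa using aux_neg_part_le hμν
  have hN_ne : N ≠ ∞ := (hN_le.trans_lt one_lt_top).ne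
  by_cases hP : P = ∞
  · -- infinite entropy: the right-hand side is ∞
    have : relEntropy μ ν = ∞ := by
      rw [relEntropy, ← hP_def, ← hN_def, hP, ENNReal.top_sub hN_ne]
    rw [this]
    simp [ENNReal.top_div_of_ne_top hden_top]
  · -- finite entropy: llr is integrable
    have h_int : Integrable (llr μ ν) μ := by
      refine ⟨(measurable_llr μ ν).aestronglyMeasurable, ?_⟩
      rw [HasFiniteIntegral]
      have : ∀ x, (‖llr μ ν x‖₊ : ℝ≥0∞) = ENNReal.ofReal (llr μ ν x)
          + ENNReal.ofReal (-llr μ ν x) := by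
        intro x
        rcases le_total 0 (llr μ ν x) with h | h
        · rw [show ENNReal.ofReal (-llr μ ν x) = 0 from ENNReal.ofReal_of_nonpos (by linarith),
            add_zero, ← enorm_eq_nnnorm, ← ofReal_norm, Real.norm_of_nonneg h]
        · rw [show ENNReal.ofReal (llr μ ν x) = 0 from ENNReal.ofReal_of_nonpos h,
            zero_add, ← enorm_eq_nnnorm, ← ofReal_norm, Real.norm_of_nonpos h]
      calc ∫⁻ x, (‖llr μ ν x‖₊ : ℝ≥0∞) ∂μ
          = P + N := by
            simp_rw [this]
            rw [lintegral_add_left ((measurable_llr μ ν).ennreal_ofReal)]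
        _ < ∞ := by
            rw [ENNReal.add_lt_top]
            exact ⟨lt_top_iff_ne_top.mpr hP, lt_top_iff_ne_top.mpr hN_ne⟩
    set I : ℝ := ∫ x, llr μ ν x ∂μ with hI_def
    have hI_nonneg : 0 ≤ I := aux_gibbs hμν h_int
    have hIPN : I = P.toReal - N.toReal := by
      rw [hI_def, integral_eq_lintegral_pos_part_sub_lintegral_neg_part h_int]
    have hRE : relEntropy μ ν = ENNReal.ofReal I := by
      have hNP : N ≤ P := by
        rw [← ENNReal.toReal_le_toReal hN_ne hP]
        linarith
      rw [relEntropy, ← hP_def, ← hN_def]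
      rw [← ENNReal.ofReal_toReal (a := P - N) (by simp [ENNReal.sub_ne_top hP]),
        ENNReal.toReal_sub_of_le hNP hP, ← hIPN]
    -- the key real inequality via tilting
    set f : α → ℝ := A.indicator fun _ => c with hf_def
    have hf_meas : Measurable f := measurable_const.indicator hA
    have hf_int : Integrable f μ := (integrable_const c).indicator hA
    have hef : ∀ x, Real.exp (f x) = 1 + A.indicator (fun _ => Real.exp c - 1) x := by
      intro x
      by_cases hx : x ∈ A <;> simp [hf_def, hx]
    have hef_int : Integrable (fun x => Real.exp (f x)) ν := by
      simp_rw [hef]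
      exact (integrable_const 1).add (((integrable_const _).indicator hA))
    have hexp_c : Real.exp c = 1 + 1 / t := Real.exp_log (by linarith)
    have hef_val : ∫ x, Real.exp (f x) ∂ν = 2 := by
      simp_rw [hef]
      rw [integral_add (integrable_const 1) ((integrable_const _).indicator hA),
        integral_indicator_const _ hA]
      simp only [integral_const, probReal_univ, measureReal_def, ← ht_def, ENNReal.toReal_one, smul_eq_mul, one_mul]
      rw [hexp_c]
      field_simp
      norm_num
    have hf_val : ∫ x, f x ∂μ = c * (μ A).toReal := by
      rw [hf_def, integral_indicator_const _ hA, smul_eq_mul]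
      exact mul_comm _ _
    -- the tilted measure
    haveI : IsProbabilityMeasure (ν.tilted f) :=
      isProbabilityMeasure_tilted hef_int
    have hμν' : μ ≪ ν.tilted f := hμν.trans (absolutelyContinuous_tilted hef_int)
    have h_int' : Integrable (llr μ (ν.tilted f)) μ :=
      integrable_llr_tilted_right hμν hf_int h_int hef_int
    have h0 : 0 ≤ ∫ x, llr μ (ν.tilted f) x ∂μ := aux_gibbs hμν' h_int'
    rw [integral_llr_tilted_right hμν hf_int hef_int h_int, hef_val, hf_val, ← hI_def] at h0
    have hkey : c * (μ A).toReal ≤ Real.log 2 + I := by linarith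
    -- transfer to ℝ≥0∞
    rw [hRE, ENNReal.le_div_iff_mul_le (Or.inl hden0) (Or.inl hden_top)]
    calc μ A * ENNReal.ofReal c
        = ENNReal.ofReal ((μ A).toReal) * ENNReal.ofReal c := by
          rw [ENNReal.ofReal_toReal (measure_ne_top μ A)]
      _ = ENNReal.ofReal (c * (μ A).toReal) := by
          rw [← ENNReal.ofReal_mul ENNReal.toReal_nonneg, mul_comm]
      _ ≤ ENNReal.ofReal (Real.log 2 + I) := ENNReal.ofReal_le_ofReal hkey
      _ = ENNReal.ofReal (Real.log 2) + ENNReal.ofReal I := ENNReal.ofReal_add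
          (Real.log_nonneg one_le_two) hI_nonneg
end

section
/- Let ν be a probability measure with full support on a finite set S, and let A : L²(ν) → L²(ν) be a linear operator that is self-adjoint and nonnegative with respect to the ν-inner product ⟨u,v⟩_ν = E_ν[uv], with A applied to the constant function 1 equal to 0. Suppose there is W > 0 such that the Poincaré inequality Var_ν(u) ≤ W ⟨u, Au⟩_ν holds for every u : S → ℝ. Then for every r : S → ℝ with E_ν[r] = 0 and every φ : S → ℝ, one has |E_ν[r φ]| ≤ (W E_ν[r²])^{1/2} · ⟨φ, Aφ⟩_ν^{1/2}. -/
/-- Abstract spectral-gap bound: if `A` is a nonnegative self-adjoint operator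
on `L²(ν)` over a finite set, killing constants, and satisfying the Poincaré
inequality `Var_ν(u) ≤ W ⟨u, Au⟩_ν`, then for every mean-zero `r` and every
`φ`, `|E_ν[rφ]| ≤ (W E_ν[r²])^{1/2} ⟨φ, Aφ⟩_ν^{1/2}`. -/
theorem stmt_9 {S : Type*} [Fintype S] (ν : S → ℝ)
    (hν_pos : ∀ x, 0 < ν x) (hν_sum : ∑ x, ν x = 1)
    (A : (S → ℝ) →ₗ[ℝ] (S → ℝ))
    (hA_symm : ∀ u v : S → ℝ, ∑ x, ν x * u x * A v x = ∑ x, ν x * A u x * v x)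
    (hA_nonneg : ∀ u : S → ℝ, 0 ≤ ∑ x, ν x * u x * A u x)
    (hA_const : A (fun _ => 1) = 0)
    (W : ℝ) (hW : 0 < W)
    (hPoincare : ∀ u : S → ℝ,
      (∑ x, ν x * u x ^ 2) - (∑ x, ν x * u x) ^ 2 ≤ W * ∑ x, ν x * u x * A u x)
    (r φ : S → ℝ) (hr : ∑ x, ν x * r x = 0) :
    |∑ x, ν x * r x * φ x| ≤
      Real.sqrt (W * ∑ x, ν x * r x ^ 2) * Real.sqrt (∑ x, ν x * φ x * A φ x) := by
  set c : ℝ := ∑ x, ν x * φ x with hc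
  set ψ : S → ℝ := fun x => φ x - c with hψ
  have key : ∑ x, ν x * r x * φ x = ∑ x, ν x * r x * ψ x := by
    simp only [hψ, mul_sub]
    rw [Finset.sum_sub_distrib]
    have : ∑ x, ν x * r x * c = (∑ x, ν x * r x) * c := by
      rw [Finset.sum_mul]
    rw [this, hr, zero_mul, sub_zero]
  -- Cauchy–Schwarz with weights √ν
  have hCS : (∑ x, ν x * r x * ψ x) ^ 2 ≤
      (∑ x, ν x * r x ^ 2) * ∑ x, ν x * ψ x ^ 2 := by
    have h := Finset.sum_mul_sq_le_sq_mul_sq Finset.univ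
      (fun x => Real.sqrt (ν x) * r x) (fun x => Real.sqrt (ν x) * ψ x)
    have e1 : ∀ x : S, (Real.sqrt (ν x) * r x) * (Real.sqrt (ν x) * ψ x)
        = ν x * r x * ψ x := by
      intro x
      have : Real.sqrt (ν x) * Real.sqrt (ν x) = ν x :=
        Real.mul_self_sqrt (hν_pos x).le
      ring_nf
      rw [Real.sq_sqrt (hν_pos x).le]
      ring
    have e2 : ∀ (u : S → ℝ) (x : S), (Real.sqrt (ν x) * u x) ^ 2 = ν x * u x ^ 2 := by
      intro u x
      rw [mul_pow, Real.sq_sqrt (hν_pos x).le]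
    simp only [e1, e2] at h
    exact h
  have hVar : ∑ x, ν x * ψ x ^ 2 ≤ W * ∑ x, ν x * φ x * A φ x := by
    have expand : ∑ x, ν x * ψ x ^ 2
        = (∑ x, ν x * φ x ^ 2) - (∑ x, ν x * φ x) ^ 2 := by
      have : ∀ x : S, ν x * ψ x ^ 2 = ν x * φ x ^ 2 - 2 * c * (ν x * φ x) + c ^ 2 * ν x := by
        intro x; simp only [hψ]; ring
      rw [Finset.sum_congr rfl fun x _ => this x]
      rw [Finset.sum_add_distrib, Finset.sum_sub_distrib, ← Finset.mul_sum,
        ← Finset.mul_sum, hν_sum, ← hc]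
      ring
    rw [expand]
    exact hPoincare φ
  have hr2 : 0 ≤ ∑ x, ν x * r x ^ 2 :=
    Finset.sum_nonneg fun x _ => mul_nonneg (hν_pos x).le (sq_nonneg _)
  have hψ2 : 0 ≤ ∑ x, ν x * ψ x ^ 2 :=
    Finset.sum_nonneg fun x _ => mul_nonneg (hν_pos x).le (sq_nonneg _)
  have hAφ : 0 ≤ ∑ x, ν x * φ x * A φ x := hA_nonneg φ
  rw [key]
  have habs : |∑ x, ν x * r x * ψ x| ≤
      Real.sqrt ((∑ x, ν x * r x ^ 2) * ∑ x, ν x * ψ x ^ 2) := by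
    rw [← Real.sqrt_sq_eq_abs]
    exact Real.sqrt_le_sqrt hCS
  refine habs.trans ?_
  rw [← Real.sqrt_mul (by positivity)]
  apply Real.sqrt_le_sqrt
  calc (∑ x, ν x * r x ^ 2) * ∑ x, ν x * ψ x ^ 2
      ≤ (∑ x, ν x * r x ^ 2) * (W * ∑ x, ν x * φ x * A φ x) :=
        mul_le_mul_of_nonneg_left hVar hr2
    _ = W * (∑ x, ν x * r x ^ 2) * ∑ x, ν x * φ x * A φ x := by ring
end
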